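/- Let V ⊆ ℝ^d be a Borel-measurable cone (closed under multiplication by positive scalars) with dual cone V*, and let w ∈ ℝ^d. Then γ(V + w) ≥ γ(V) · exp(−½‖w‖² − dist(w, −V*)·√d) and γ(V + w) ≤ γ(V) · exp(−½‖proj_{V*} w‖² + dist(w, V*)·√d). -/

import Mathlib

/-!
Translating by `w` gives `γ(V + w) = e^{-‖w‖²/2} ∫_V e^{-⟪x, w⟫} dγ(x)`. For `q ∈ -V*` and
`p ∈ V*`, Cauchy–Schwarz gives `⟪x, w⟫ ≤ dist(w, q) ‖x‖` and `-⟪x, w⟫ ≤ dist(w, p) ‖x‖` on `V`, so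
it remains to compare `∫_V e^{∓c‖x‖} dγ` with `γ(V)`. Completing the square
(`c‖x‖ ≤ (u/2)(d + ‖x‖²)` with `u = c/√d`, and its analogue for `+c‖x‖`) trades the weight
`e^{∓c‖x‖}` for the dilated density `e^{-s‖x‖²/2}` with `s = (1 + u)^{±1}`. On a cone, dilating
changes the integral by exactly `s^{-d/2}`, and `1 + u ≤ eᵘ` bounds `(1 + u)^{d/2}` by `e^{c√d/2}`.
The distance to the closed set `-V*` is attained, and since `p` is the projection of `w` onto the
closed convex cone `V*`, `‖w‖² ≥ ‖p‖² + dist(w, p)²`, which absorbs the `e^{dist(w, p)²/2}`.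
-/

open MeasureTheory Set Metric RealInnerProductSpace

noncomputable section

/-- Standard Gaussian measure of a set in `ℝ^d`. -/
def gauss {d : ℕ} (B : Set (EuclideanSpace ℝ (Fin d))) : ℝ :=
  ∫ x in B, (2 * Real.pi) ^ (-(d : ℝ) / 2) * Real.exp (-‖x‖ ^ 2 / 2)

/-- Dual cone of a set. -/
def dualCone {d : ℕ} (V : Set (EuclideanSpace ℝ (Fin d))) : Set (EuclideanSpace ℝ (Fin d)) :=
  {y | ∀ x ∈ V, 0 ≤ ⟪x, y⟫}

open Module

open Pointwise in
lemma smul_set_eq_self_of_cone {M : Type*} [AddCommGroup M] [Module ℝ M] {V : Set M}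
    (hVcone : ∀ c : ℝ, 0 < c → ∀ x ∈ V, c • x ∈ V) {c : ℝ} (hc : 0 < c) : c • V = V := by
  refine (smul_set_subset_iff.2 fun x hx => hVcone c hc x hx).antisymm fun x hx => ?_
  exact ⟨c⁻¹ • x, hVcone _ (inv_pos.2 hc) x hx, smul_inv_smul₀ hc.ne' x⟩

lemma sqrt_one_add_div_sqrt_pow_le (d : ℕ) {c : ℝ} (hc : 0 ≤ c) :
    √(1 + c / √d) ^ d ≤ Real.exp (c * √d / 2) := by
  have hbase : √(1 + c / √d) ≤ Real.exp (c / √d / 2) := by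
    rw [Real.exp_half]
    exact Real.sqrt_le_sqrt (by linarith [Real.add_one_le_exp (c / √d)])
  calc √(1 + c / √d) ^ d ≤ Real.exp (c / √d / 2) ^ d := by gcongr
    _ = Real.exp (c * √d / 2) := by
      rw [← Real.exp_nat_mul]
      congr 1
      calc (d : ℝ) * (c / √d / 2) = c * (d / √d) / 2 := by ring
        _ = c * √d / 2 := by rw [Real.div_sqrt]

section FiniteDimensional

variable {E : Type*} [NormedAddCommGroup E] [InnerProductSpace ℝ E] [FiniteDimensional ℝ E]

lemma norm_eq_zero_of_finrank_eq_zero (h : finrank ℝ E = 0) (x : E) : ‖x‖ = 0 := by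
  have := finrank_zero_iff.1 h
  rw [Subsingleton.elim x 0, norm_zero]

-- In dimension `0` the junk value `c / √0 = 0` is harmless, since then `x = 0`.
lemma mul_norm_le_of_finrank {c : ℝ} (hc : 0 ≤ c) (x : E) :
    c * ‖x‖ ≤ c / √(finrank ℝ E) * (finrank ℝ E + ‖x‖ ^ 2) / 2 := by
  rcases (finrank ℝ E).eq_zero_or_pos with hd | hd
  · simp [norm_eq_zero_of_finrank_eq_zero hd x, hd]
  set t := √(finrank ℝ E : ℝ)
  have ht : 0 < t := Real.sqrt_pos.2 (by exact_mod_cast hd)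
  have htt : (finrank ℝ E : ℝ) = t ^ 2 := (Real.sq_sqrt (Nat.cast_nonneg _)).symm
  rw [htt, div_mul_eq_mul_div, div_div, le_div_iff₀ (by positivity)]
  nlinarith [mul_nonneg hc (sq_nonneg (t - ‖x‖))]

lemma neg_sq_norm_div_two_add_mul_norm_le {c : ℝ} (hc : 0 ≤ c) (x : E) :
    -‖x‖ ^ 2 / 2 + c * ‖x‖
      ≤ -((1 + c / √(finrank ℝ E))⁻¹ * ‖x‖ ^ 2) / 2 + c * (c + √(finrank ℝ E)) / 2 := by
  rcases (finrank ℝ E).eq_zero_or_pos with hd | hd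
  · rw [norm_eq_zero_of_finrank_eq_zero hd x, hd, Nat.cast_zero, Real.sqrt_zero]
    nlinarith [sq_nonneg c]
  set t := √(finrank ℝ E : ℝ)
  have ht : 0 < t := Real.sqrt_pos.2 (by exact_mod_cast hd)
  have hinv : (1 + c / t)⁻¹ = t / (c + t) := by field_simp; ring
  have hsq : -(t / (c + t) * ‖x‖ ^ 2) / 2 + c * (c + t) / 2 - (-‖x‖ ^ 2 / 2 + c * ‖x‖)
      = c * (‖x‖ - (c + t)) ^ 2 / (2 * (c + t)) := by
    field_simp
    ring
  rw [hinv, ← sub_nonneg, hsq]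
  positivity

variable [MeasurableSpace E] [BorelSpace E]

lemma integrable_exp_neg_mul_sq_norm_div_two_sub_inner {s : ℝ} (hs : 0 < s) (w : E) :
    Integrable fun x : E => Real.exp (-(s * ‖x‖ ^ 2) / 2 - ⟪x, w⟫) := by
  have h := (GaussianFourier.integrable_cexp_neg_mul_sq_norm_add (V := E)
    (b := ((s / 2 : ℝ) : ℂ)) (by simpa using half_pos hs) (-1) w).norm
  refine h.congr (.of_forall fun x => ?_)
  dsimp only
  rw [Complex.norm_exp, real_inner_comm, neg_one_mul]
  congr 1
  norm_cast
  ring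

lemma integrable_exp_neg_mul_sq_norm_div_two {s : ℝ} (hs : 0 < s) :
    Integrable fun x : E => Real.exp (-(s * ‖x‖ ^ 2) / 2) := by
  simpa using integrable_exp_neg_mul_sq_norm_div_two_sub_inner hs (0 : E)

lemma integrable_exp_neg_sq_norm_div_two_sub_inner (w : E) :
    Integrable fun x : E => Real.exp (-‖x‖ ^ 2 / 2 - ⟪x, w⟫) := by
  simpa using integrable_exp_neg_mul_sq_norm_div_two_sub_inner one_pos w

lemma setIntegral_image_add_right (V : Set E) (w : E) :
    ∫ x in (· + w) '' V, Real.exp (-‖x‖ ^ 2 / 2)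
      = Real.exp (-‖w‖ ^ 2 / 2) * ∫ x in V, Real.exp (-‖x‖ ^ 2 / 2 - ⟪x, w⟫) := by
  rw [(measurePreserving_add_right volume w).setIntegral_image_emb
    (measurableEmbedding_addRight w), ← integral_const_mul]
  congr 1 with x
  rw [← Real.exp_add, norm_add_sq_real]
  ring_nf

variable {V : Set E}

lemma setIntegral_exp_neg_mul_sq_norm_div_two_of_cone
    (hVcone : ∀ c : ℝ, 0 < c → ∀ x ∈ V, c • x ∈ V) {s : ℝ} (hs : 0 < s) :
    ∫ x in V, Real.exp (-(s * ‖x‖ ^ 2) / 2)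
      = (√s ^ finrank ℝ E)⁻¹ * ∫ x in V, Real.exp (-‖x‖ ^ 2 / 2) := by
  have hsqrt : 0 < √s := Real.sqrt_pos.2 hs
  have hcomp := Measure.setIntegral_comp_smul_of_pos volume
    (fun y : E => Real.exp (-‖y‖ ^ 2 / 2)) V hsqrt
  rw [smul_set_eq_self_of_cone hVcone hsqrt, smul_eq_mul] at hcomp
  rw [← hcomp]
  congr 1 with x
  rw [norm_smul, Real.norm_of_nonneg hsqrt.le, mul_pow, Real.sq_sqrt hs.le]

lemma exp_mul_setIntegral_le_setIntegral_exp_sub_inner (hVmeas : MeasurableSet V)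
    (hVcone : ∀ c : ℝ, 0 < c → ∀ x ∈ V, c • x ∈ V) {w : E} {c : ℝ} (hc : 0 ≤ c)
    (hw : ∀ x ∈ V, ⟪x, w⟫ ≤ c * ‖x‖) :
    Real.exp (-(c * √(finrank ℝ E))) * ∫ x in V, Real.exp (-‖x‖ ^ 2 / 2)
      ≤ ∫ x in V, Real.exp (-‖x‖ ^ 2 / 2 - ⟪x, w⟫) := by
  set d := finrank ℝ E
  have hA : 0 ≤ ∫ x in V, Real.exp (-‖x‖ ^ 2 / 2) :=
    setIntegral_nonneg hVmeas fun x _ => (Real.exp_pos _).le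
  have hs : 0 < 1 + c / √d := by positivity
  have hpt : ∀ x ∈ V, Real.exp (-(c * √d) / 2) * Real.exp (-((1 + c / √d) * ‖x‖ ^ 2) / 2)
      ≤ Real.exp (-‖x‖ ^ 2 / 2 - ⟪x, w⟫) := by
    intro x hx
    have hcd : c / √d * d = c * √d := by
      rw [div_mul_eq_mul_div, mul_div_assoc, Real.div_sqrt]
    rw [← Real.exp_add, Real.exp_le_exp]
    nlinarith [mul_norm_le_of_finrank hc x, hw x hx]
  have hmono := setIntegral_mono_on
    ((integrable_exp_neg_mul_sq_norm_div_two hs).const_mul _).integrableOn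
    (integrable_exp_neg_sq_norm_div_two_sub_inner w).integrableOn hVmeas hpt
  rw [integral_const_mul, setIntegral_exp_neg_mul_sq_norm_div_two_of_cone hVcone hs] at hmono
  have hscale : Real.exp (-(c * √d / 2)) ≤ (√(1 + c / √d) ^ d)⁻¹ := by
    rw [Real.exp_neg]
    exact inv_anti₀ (by positivity) (sqrt_one_add_div_sqrt_pow_le d hc)
  calc Real.exp (-(c * √d)) * ∫ x in V, Real.exp (-‖x‖ ^ 2 / 2)
      = Real.exp (-(c * √d) / 2)
          * (Real.exp (-(c * √d / 2)) * ∫ x in V, Real.exp (-‖x‖ ^ 2 / 2)) := by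
        rw [← mul_assoc, ← Real.exp_add]
        ring_nf
    _ ≤ _ := by gcongr
    _ ≤ _ := hmono

lemma setIntegral_exp_sub_inner_le (hVmeas : MeasurableSet V)
    (hVcone : ∀ c : ℝ, 0 < c → ∀ x ∈ V, c • x ∈ V) {w : E} {c : ℝ} (hc : 0 ≤ c)
    (hw : ∀ x ∈ V, -⟪x, w⟫ ≤ c * ‖x‖) :
    ∫ x in V, Real.exp (-‖x‖ ^ 2 / 2 - ⟪x, w⟫)
      ≤ Real.exp (c ^ 2 / 2 + c * √(finrank ℝ E)) * ∫ x in V, Real.exp (-‖x‖ ^ 2 / 2) := by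
  set d := finrank ℝ E
  have hA : 0 ≤ ∫ x in V, Real.exp (-‖x‖ ^ 2 / 2) :=
    setIntegral_nonneg hVmeas fun x _ => (Real.exp_pos _).le
  have hs : 0 < (1 + c / √d)⁻¹ := by positivity
  have hpt : ∀ x ∈ V, Real.exp (-‖x‖ ^ 2 / 2 - ⟪x, w⟫)
      ≤ Real.exp (c * (c + √d) / 2) * Real.exp (-((1 + c / √d)⁻¹ * ‖x‖ ^ 2) / 2) := by
    intro x hx
    rw [← Real.exp_add, Real.exp_le_exp]
    linarith [neg_sq_norm_div_two_add_mul_norm_le hc x, hw x hx]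
  have hmono := setIntegral_mono_on (integrable_exp_neg_sq_norm_div_two_sub_inner w).integrableOn
    ((integrable_exp_neg_mul_sq_norm_div_two hs).const_mul _).integrableOn hVmeas hpt
  rw [integral_const_mul, setIntegral_exp_neg_mul_sq_norm_div_two_of_cone hVcone hs,
    Real.sqrt_inv, inv_pow, inv_inv] at hmono
  calc _ ≤ _ := hmono
    _ ≤ Real.exp (c * (c + √d) / 2)
          * (Real.exp (c * √d / 2) * ∫ x in V, Real.exp (-‖x‖ ^ 2 / 2)) := by
        gcongr
        exact sqrt_one_add_div_sqrt_pow_le d hc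
    _ = _ := by
        rw [← mul_assoc, ← Real.exp_add]
        ring_nf

end FiniteDimensional

section InnerProductSpace

variable {F : Type*} [NormedAddCommGroup F] [InnerProductSpace ℝ F]

lemma real_inner_le_real_inner_add_norm_mul_dist (x w q : F) :
    ⟪x, w⟫ ≤ ⟪x, q⟫ + ‖x‖ * dist w q := by
  have h := real_inner_le_norm x (w - q)
  rw [inner_sub_right, ← dist_eq_norm] at h
  linarith

lemma norm_sq_add_dist_sq_le_of_forall_dist_le {K : Set F} (hK : Convex ℝ K) (h0 : (0 : F) ∈ K)
    {w p : F} (hp : p ∈ K) (hmin : ∀ a ∈ K, dist w p ≤ dist w a) :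
    ‖p‖ ^ 2 + dist w p ^ 2 ≤ ‖w‖ ^ 2 := by
  have hinf : ‖w - p‖ = ⨅ a : K, ‖w - a‖ := by
    have : Nonempty K := ⟨⟨p, hp⟩⟩
    refine le_antisymm (le_ciInf fun a => ?_) (ciInf_le ?_ (⟨p, hp⟩ : K))
    · simpa only [dist_eq_norm] using hmin a a.2
    · exact ⟨0, by rintro _ ⟨a, rfl⟩; exact norm_nonneg _⟩
  have hperp := (norm_eq_iInf_iff_real_inner_le_zero hK hp).1 hinf 0 h0
  have hw : ‖w‖ ^ 2 = ‖w - p‖ ^ 2 + 2 * ⟪w - p, p⟫ + ‖p‖ ^ 2 := by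
    rw [← norm_add_sq_real, sub_add_cancel]
  rw [zero_sub, inner_neg_right] at hperp
  rw [dist_eq_norm]
  linarith

end InnerProductSpace

section DualCone

variable {d : ℕ} (V : Set (EuclideanSpace ℝ (Fin d)))

lemma zero_mem_dualCone : (0 : EuclideanSpace ℝ (Fin d)) ∈ dualCone V :=
  fun x _ => (inner_zero_right x).ge

lemma convex_dualCone : Convex ℝ (dualCone V) := by
  intro y hy z hz a b ha hb _ x hx
  rw [inner_add_right, real_inner_smul_right, real_inner_smul_right]
  exact add_nonneg (mul_nonneg ha (hy x hx)) (mul_nonneg hb (hz x hx))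

lemma isClosed_dualCone : IsClosed (dualCone V) := by
  have h : dualCone V = ⋂ x ∈ V, {y | 0 ≤ ⟪x, y⟫} := by
    ext
    simp [dualCone]
  rw [h]
  exact isClosed_biInter fun x _ =>
    isClosed_le continuous_const (continuous_const.inner continuous_id)

variable {V} {x : EuclideanSpace ℝ (Fin d)}

lemma real_inner_le_dist_mul_norm_of_neg_mem_dualCone {w q : EuclideanSpace ℝ (Fin d)}
    (hq : -q ∈ dualCone V) (hx : x ∈ V) : ⟪x, w⟫ ≤ dist w q * ‖x‖ := by
  have hxq : 0 ≤ ⟪x, -q⟫ := hq x hx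
  rw [inner_neg_right] at hxq
  linarith [real_inner_le_real_inner_add_norm_mul_dist x w q]

lemma neg_real_inner_le_dist_mul_norm_of_mem_dualCone {w p : EuclideanSpace ℝ (Fin d)}
    (hp : p ∈ dualCone V) (hx : x ∈ V) : -⟪x, w⟫ ≤ dist w p * ‖x‖ := by
  rw [dist_comm]
  linarith [real_inner_le_real_inner_add_norm_mul_dist x p w, hp x hx]

end DualCone

lemma gauss_eq {d : ℕ} (B : Set (EuclideanSpace ℝ (Fin d))) :
    gauss B = (2 * Real.pi) ^ (-(d : ℝ) / 2) * ∫ x in B, Real.exp (-‖x‖ ^ 2 / 2) :=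
  integral_const_mul _ _

lemma gauss_image_add_right {d : ℕ} (V : Set (EuclideanSpace ℝ (Fin d)))
    (w : EuclideanSpace ℝ (Fin d)) :
    gauss ((· + w) '' V) = (2 * Real.pi) ^ (-(d : ℝ) / 2)
      * (Real.exp (-‖w‖ ^ 2 / 2) * ∫ x in V, Real.exp (-‖x‖ ^ 2 / 2 - ⟪x, w⟫)) := by
  rw [gauss_eq, setIntegral_image_add_right]

section GaussShiftedCone

variable {d : ℕ} {V : Set (EuclideanSpace ℝ (Fin d))}

lemma gauss_mul_exp_le_gauss_image_add_right (hVmeas : MeasurableSet V)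
    (hVcone : ∀ c : ℝ, 0 < c → ∀ x ∈ V, c • x ∈ V) (w : EuclideanSpace ℝ (Fin d)) :
    gauss V * Real.exp (-‖w‖ ^ 2 / 2 - infDist w (-(dualCone V)) * √d)
      ≤ gauss ((· + w) '' V) := by
  obtain ⟨q, hq, hqd⟩ := (isClosed_dualCone V).neg.exists_infDist_eq_dist
    ⟨0, by simpa using zero_mem_dualCone V⟩ w
  have hJ := exp_mul_setIntegral_le_setIntegral_exp_sub_inner hVmeas hVcone dist_nonneg
    fun x hx => real_inner_le_dist_mul_norm_of_neg_mem_dualCone (w := w) hq hx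
  rw [finrank_euclideanSpace_fin] at hJ
  rw [gauss_image_add_right, gauss_eq, hqd]
  calc _ = (2 * Real.pi) ^ (-(d : ℝ) / 2) * (Real.exp (-‖w‖ ^ 2 / 2)
        * (Real.exp (-(dist w q * √d)) * ∫ x in V, Real.exp (-‖x‖ ^ 2 / 2))) := by
        rw [sub_eq_add_neg, Real.exp_add]
        ring
    _ ≤ _ := by gcongr

lemma gauss_image_add_right_le (hVmeas : MeasurableSet V)
    (hVcone : ∀ c : ℝ, 0 < c → ∀ x ∈ V, c • x ∈ V) {w p : EuclideanSpace ℝ (Fin d)}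
    (hp : p ∈ dualCone V) (hpmin : ∀ a ∈ dualCone V, dist w p ≤ dist w a) :
    gauss ((· + w) '' V)
      ≤ gauss V * Real.exp (-‖p‖ ^ 2 / 2 + infDist w (dualCone V) * √d) := by
  have hA : 0 ≤ ∫ x in V, Real.exp (-‖x‖ ^ 2 / 2) :=
    setIntegral_nonneg hVmeas fun x _ => (Real.exp_pos _).le
  have hdist : infDist w (dualCone V) = dist w p :=
    le_antisymm (infDist_le_dist_of_mem hp) ((le_infDist ⟨p, hp⟩).2 hpmin)
  have hJ := setIntegral_exp_sub_inner_le hVmeas hVcone dist_nonneg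
    fun x hx => neg_real_inner_le_dist_mul_norm_of_mem_dualCone (w := w) hp hx
  have hproj := norm_sq_add_dist_sq_le_of_forall_dist_le (convex_dualCone V)
    (zero_mem_dualCone V) hp hpmin
  rw [finrank_euclideanSpace_fin] at hJ
  rw [gauss_image_add_right, gauss_eq, hdist]
  calc _ ≤ (2 * Real.pi) ^ (-(d : ℝ) / 2) * (Real.exp (-‖w‖ ^ 2 / 2)
        * (Real.exp (dist w p ^ 2 / 2 + dist w p * √d) * ∫ x in V, Real.exp (-‖x‖ ^ 2 / 2))) := by
        gcongr
    _ = (2 * Real.pi) ^ (-(d : ℝ) / 2) * (∫ x in V, Real.exp (-‖x‖ ^ 2 / 2))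
        * Real.exp (-‖w‖ ^ 2 / 2 + dist w p ^ 2 / 2 + dist w p * √d) := by
        simp only [Real.exp_add]
        ring
    _ ≤ _ := by
        gcongr
        linarith

end GaussShiftedCone

/-- Gaussian measure of shifted cones: two-sided bounds. -/
theorem stmt4 {d : ℕ} (V : Set (EuclideanSpace ℝ (Fin d))) (hVmeas : MeasurableSet V)
    (hVcone : ∀ c : ℝ, 0 < c → ∀ x ∈ V, c • x ∈ V)
    (w p : EuclideanSpace ℝ (Fin d))
    (hp : p ∈ dualCone V) (hpmin : ∀ a ∈ dualCone V, dist w p ≤ dist w a) :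
    gauss V * Real.exp (-‖w‖ ^ 2 / 2 - infDist w (-(dualCone V)) * Real.sqrt d)
      ≤ gauss ((· + w) '' V) ∧
    gauss ((· + w) '' V)
      ≤ gauss V * Real.exp (-‖p‖ ^ 2 / 2 + infDist w (dualCone V) * Real.sqrt d) :=
  ⟨gauss_mul_exp_le_gauss_image_add_right hVmeas hVcone w,
    gauss_image_add_right_le hVmeas hVcone hp hpmin⟩
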